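/- arXiv:1707.05391 — 2 statements merged into one kernel-verified Lean document; each statement's English description precedes it below -/
import Mathlib

section
/- Let Γ > 0 and ε ∈ (0, √(2/(eπ))]. Define f(x) = (x/(2Γ)) · (erf(k(x+2Γ)) + erf(k(−x+2Γ)))/2 with k = (√2/(2Γ))·√(log(2/(π ε²))). Then for all x with |x| ≤ Γ one has |f(x) − x/(2Γ)| ≤ |x| ε /(2Γ). -/
open MeasureTheory

/-- The error function `erf x = (2/√π) ∫_0^x e^{-y²} dy`. -/
noncomputable def erf (x : ℝ) : ℝ :=
  2 / Real.sqrt Real.pi * ∫ y in (0:ℝ)..x, Real.exp (-(y ^ 2))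

/-!
Since `erf a = 1 - (2/√π) ∫_a^∞ e^{-y²} dy`, the defect `(erf a + erf b)/2 - 1` is bounded by the
Gaussian tail at `t = min a b`, and for `|x| ≤ Γ` both `a = k(x + 2Γ)` and `b = k(-x + 2Γ)` are at
least `t = kΓ`. The Mills-ratio bound `∫_t^∞ e^{-y²} dy ≤ e^{-t²}/(2t)` then gives a defect of at
most `e^{-t²}/(√π t)`, and `k` is chosen so that `2t² = log (2/(πε²))`, which makes this equal to
`ε / √(2t²)`; the constraint `ε ≤ √(2/(eπ))` is exactly `2t² ≥ 1`.
-/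

open Real Set Filter

noncomputable def gaussianTail (t : ℝ) : ℝ := ∫ y in Ioi t, exp (-(y ^ 2))

lemma integrable_exp_neg_sq : Integrable fun y : ℝ => exp (-(y ^ 2)) := by
  simpa using integrable_exp_neg_mul_sq one_pos

lemma integrable_mul_exp_neg_sq : Integrable fun y : ℝ => y * exp (-(y ^ 2)) := by
  simpa using integrable_mul_exp_neg_mul_sq one_pos

lemma gaussianTail_nonneg (t : ℝ) : 0 ≤ gaussianTail t :=
  setIntegral_nonneg measurableSet_Ioi fun _ _ => (exp_pos _).le

lemma gaussianTail_antitone : Antitone gaussianTail := fun _ _ hst =>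
  setIntegral_mono_set integrable_exp_neg_sq.integrableOn
    (Eventually.of_forall fun _ => (exp_pos _).le) (Ioi_subset_Ioi hst).eventuallyLE

lemma gaussianTail_zero : gaussianTail 0 = √π / 2 := by
  simpa [gaussianTail] using integral_gaussian_Ioi 1

lemma erf_eq_one_sub_gaussianTail (a : ℝ) : erf a = 1 - 2 / √π * gaussianTail a := by
  have hsub : ∫ y in (0:ℝ)..a, exp (-(y ^ 2)) = gaussianTail 0 - gaussianTail a :=
    (intervalIntegral.integral_Ioi_sub_Ioi' integrable_exp_neg_sq.integrableOn
      integrable_exp_neg_sq.integrableOn).symm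
  have hπ : √π ≠ 0 := by positivity
  rw [erf, hsub, gaussianTail_zero]
  field_simp

lemma integral_Ioi_mul_exp_neg_sq (t : ℝ) :
    ∫ y in Ioi t, y * exp (-(y ^ 2)) = exp (-(t ^ 2)) / 2 := by
  have hderiv (y : ℝ) : HasDerivAt (fun y => -exp (-(y ^ 2)) / 2) (y * exp (-(y ^ 2))) y := by
    refine ((hasDerivAt_pow 2 y).fun_neg.exp.fun_neg.div_const 2).congr_deriv ?_
    push_cast
    ring
  have hlim : Tendsto (fun y : ℝ => -exp (-(y ^ 2)) / 2) atTop (nhds (-0 / 2)) :=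
    ((tendsto_exp_atBot.comp
      (tendsto_neg_atTop_atBot.comp (tendsto_pow_atTop two_ne_zero))).neg).div_const 2
  rw [integral_Ioi_of_hasDerivAt_of_tendsto' (fun y _ => hderiv y)
    integrable_mul_exp_neg_sq.integrableOn hlim]
  ring

/-- Mills-ratio bound: on `(t, ∞)` the integrand is dominated by `(y/t) e^{-y²}`. -/
lemma gaussianTail_le_exp_div {t : ℝ} (ht : 0 < t) :
    gaussianTail t ≤ exp (-(t ^ 2)) / (2 * t) := by
  calc gaussianTail t ≤ ∫ y in Ioi t, y * exp (-(y ^ 2)) / t := by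
        refine setIntegral_mono_on integrable_exp_neg_sq.integrableOn
          (integrable_mul_exp_neg_sq.integrableOn.div_const t) measurableSet_Ioi fun y hy => ?_
        rw [le_div_iff₀ ht, mul_comm]
        exact mul_le_mul_of_nonneg_right (le_of_lt hy) (exp_pos _).le
    _ = exp (-(t ^ 2)) / (2 * t) := by
        rw [integral_div, integral_Ioi_mul_exp_neg_sq]
        ring

lemma abs_erf_add_erf_div_two_sub_one_le {t a b : ℝ} (ht : 0 < t) (hta : t ≤ a) (htb : t ≤ b) :
    |(erf a + erf b) / 2 - 1| ≤ exp (-(t ^ 2)) / (√π * t) := by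
  have hdefect : (erf a + erf b) / 2 - 1 = -((gaussianTail a + gaussianTail b) / √π) := by
    rw [erf_eq_one_sub_gaussianTail, erf_eq_one_sub_gaussianTail]
    field_simp
    ring
  have htail : gaussianTail a + gaussianTail b ≤ exp (-(t ^ 2)) / t :=
    calc gaussianTail a + gaussianTail b ≤ gaussianTail t + gaussianTail t :=
          add_le_add (gaussianTail_antitone hta) (gaussianTail_antitone htb)
      _ ≤ exp (-(t ^ 2)) / (2 * t) + exp (-(t ^ 2)) / (2 * t) :=
          add_le_add (gaussianTail_le_exp_div ht) (gaussianTail_le_exp_div ht)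
      _ = exp (-(t ^ 2)) / t := by ring
  have hsum := add_nonneg (gaussianTail_nonneg a) (gaussianTail_nonneg b)
  rw [hdefect, abs_neg, abs_of_nonneg (by positivity), mul_comm, ← div_div]
  gcongr

lemma one_le_log_two_div_pi_mul_sq {ε : ℝ} (hε0 : 0 < ε)
    (hε : ε ≤ √(2 / (exp 1 * π))) : 1 ≤ log (2 / (π * ε ^ 2)) := by
  have hε2 : ε ^ 2 ≤ 2 / (exp 1 * π) := (le_sqrt hε0.le (by positivity)).mp hε
  rw [le_log_iff_exp_le (by positivity), le_div_iff₀ (by positivity)]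
  rw [le_div_iff₀ (by positivity)] at hε2
  linarith

lemma exp_neg_sq_div_le {ε t : ℝ} (hε0 : 0 < ε) (ht : 0 < t)
    (htε : 2 * t ^ 2 = log (2 / (π * ε ^ 2))) (ht1 : 1 ≤ 2 * t ^ 2) :
    exp (-(t ^ 2)) / (√π * t) ≤ ε := by
  have hexp : exp (-(t ^ 2)) ^ 2 = π * ε ^ 2 / 2 := by
    rw [← exp_nat_mul, show ((2 : ℕ) : ℝ) * -(t ^ 2) = -(2 * t ^ 2) by push_cast; ring, htε,
      exp_neg, exp_log (by positivity), inv_div]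
  rw [div_le_iff₀ (by positivity)]
  refine le_of_pow_le_pow_left₀ two_ne_zero (by positivity) ?_
  rw [hexp, mul_pow, mul_pow, sq_sqrt pi_pos.le]
  nlinarith [mul_le_mul_of_nonneg_left ht1 (by positivity : 0 ≤ π * ε ^ 2)]

/-- Entire approximation to the truncated linear function: for `Γ > 0`,
`ε ∈ (0, √(2/(eπ))]` and `k = (√2/(2Γ))·√(log(2/(π ε²)))`, the function
`f x = (x/(2Γ)) · (erf(k(x+2Γ)) + erf(k(−x+2Γ)))/2` satisfies
`|f x − x/(2Γ)| ≤ |x| ε /(2Γ)` for all `|x| ≤ Γ`. -/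
theorem erf_approx_lin (Γ ε k : ℝ) (hΓ : 0 < Γ) (hε0 : 0 < ε)
    (hε : ε ≤ Real.sqrt (2 / (Real.exp 1 * Real.pi)))
    (hk : k = Real.sqrt 2 / (2 * Γ) * Real.sqrt (Real.log (2 / (Real.pi * ε ^ 2)))) :
    ∀ x : ℝ, |x| ≤ Γ →
      |x / (2 * Γ) * ((erf (k * (x + 2 * Γ)) + erf (k * (-x + 2 * Γ))) / 2) - x / (2 * Γ)| ≤
        |x| * ε / (2 * Γ) := by
  intro x hx
  have hL := one_le_log_two_div_pi_mul_sq hε0 hε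
  have hkΓ : k * Γ = √2 * √(log (2 / (π * ε ^ 2))) / 2 := by
    rw [hk]; field_simp
  have ht : 0 < k * Γ := by rw [hkΓ]; positivity
  have htε : 2 * (k * Γ) ^ 2 = log (2 / (π * ε ^ 2)) := by
    rw [hkΓ, div_pow, mul_pow, sq_sqrt zero_le_two, sq_sqrt (by linarith)]; ring
  have hk0 : 0 ≤ k := (pos_of_mul_pos_left ht hΓ.le).le
  obtain ⟨hxl, hxr⟩ := abs_le.mp hx
  have hdefect : |(erf (k * (x + 2 * Γ)) + erf (k * (-x + 2 * Γ))) / 2 - 1| ≤ ε :=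
    (abs_erf_add_erf_div_two_sub_one_le ht (by gcongr; linarith) (by gcongr; linarith)).trans
      (exp_neg_sq_div_le hε0 ht htε (htε ▸ hL))
  calc _ = |x| / (2 * Γ) * |(erf (k * (x + 2 * Γ)) + erf (k * (-x + 2 * Γ))) / 2 - 1| := by
        rw [← mul_sub_one, abs_mul, abs_div, abs_of_pos (by positivity : 0 < 2 * Γ)]
    _ ≤ |x| / (2 * Γ) * ε := by gcongr
    _ = |x| * ε / (2 * Γ) := by ring
end

section
/- Let Δ ∈ (0, 1/2], x real, and ε ∈ (0, √(1/(2eπ))]. Define k = (√2/Δ)·√(log(1/(2π ε²))) and f(x) = ((x+1−Δ)/Δ) · (1 − erf(k(x+1−3Δ/2)))/2. Then: (a) for x ∈ [−1, −1+Δ], |f(x) − (x+1−Δ)/Δ| ≤ ε; and (b) for x ∈ [−1+Δ, ∞), 0 ≤ f(x) ≤ 1. -/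
open MeasureTheory

private lemma gauss_integrable : Integrable (fun y : ℝ => Real.exp (-(y ^ 2))) := by
  have := integrable_exp_neg_mul_sq (b := (1:ℝ)) one_pos
  simpa using this

private lemma gauss_Ioi0 : ∫ y in Set.Ioi (0:ℝ), Real.exp (-(y ^ 2)) = Real.sqrt Real.pi / 2 := by
  have := integral_gaussian_Ioi 1
  simpa using this

private lemma erf_neg (x : ℝ) : erf (-x) = - erf x := by
  have h : (∫ y in (0:ℝ)..(-x), Real.exp (-(y ^ 2)))
      = ∫ y in (0:ℝ)..(-x), Real.exp (-((-y) ^ 2)) := by simp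
  rw [erf, erf, h, intervalIntegral.integral_comp_neg (fun y => Real.exp (-(y ^ 2))),
    neg_zero, neg_neg, intervalIntegral.integral_symm, mul_neg]

private lemma erf_nonneg {x : ℝ} (hx : 0 ≤ x) : 0 ≤ erf x := by
  have h1 : 0 ≤ ∫ y in (0:ℝ)..x, Real.exp (-(y ^ 2)) :=
    intervalIntegral.integral_nonneg hx (fun u _ => (Real.exp_pos _).le)
  have h2 : 0 ≤ 2 / Real.sqrt Real.pi :=
    div_nonneg (by norm_num) (Real.sqrt_nonneg _)
  exact mul_nonneg h2 h1

private lemma erf_le_one_of_nonneg {x : ℝ} (hx : 0 ≤ x) : erf x ≤ 1 := by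
  have hs : (0:ℝ) < Real.sqrt Real.pi := Real.sqrt_pos.2 Real.pi_pos
  have h1 : (∫ y in Set.Ioc (0:ℝ) x, Real.exp (-(y ^ 2)))
      ≤ ∫ y in Set.Ioi (0:ℝ), Real.exp (-(y ^ 2)) := by
    apply setIntegral_mono_set gauss_integrable.integrableOn
    · filter_upwards with y using (Real.exp_pos _).le
    · exact Filter.Eventually.of_forall (Set.Ioc_subset_Ioi_self)
  rw [erf, intervalIntegral.integral_of_le hx]
  rw [gauss_Ioi0] at h1
  calc 2 / Real.sqrt Real.pi * ∫ y in Set.Ioc (0:ℝ) x, Real.exp (-(y ^ 2))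
      ≤ 2 / Real.sqrt Real.pi * (Real.sqrt Real.pi / 2) := by
        apply mul_le_mul_of_nonneg_left h1 (div_nonneg (by norm_num) hs.le)
    _ = 1 := by field_simp

private lemma erf_le_one (x : ℝ) : erf x ≤ 1 := by
  rcases le_or_gt 0 x with hx | hx
  · exact erf_le_one_of_nonneg hx
  · have : erf x = - erf (-x) := by rw [erf_neg, neg_neg]
    rw [this]
    have := erf_nonneg (x := -x) (by linarith)
    linarith

private lemma neg_one_le_erf (x : ℝ) : -1 ≤ erf x := by
  have : erf x = - erf (-x) := by rw [erf_neg, neg_neg]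
  rw [this]
  have := erf_le_one (-x)
  linarith

private lemma erfc_le {y : ℝ} (hy : 0 ≤ y) : 1 - erf y ≤ Real.exp (-(y ^ 2)) := by
  have hs : (0:ℝ) < Real.sqrt Real.pi := Real.sqrt_pos.2 Real.pi_pos
  -- split the half-line integral
  have hsplit : (∫ t in Set.Ioc (0:ℝ) y, Real.exp (-(t ^ 2)))
        + ∫ t in Set.Ioi y, Real.exp (-(t ^ 2)) = Real.sqrt Real.pi / 2 := by
    rw [← gauss_Ioi0, ← Set.Ioc_union_Ioi_eq_Ioi hy]
    exact (setIntegral_union Set.Ioc_disjoint_Ioi_same measurableSet_Ioi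
      gauss_integrable.integrableOn gauss_integrable.integrableOn).symm
  -- bound the tail integral
  have hshift : (∫ t in Set.Ioi y, Real.exp (-((t - y) ^ 2)))
      = ∫ t in Set.Ioi (0:ℝ), Real.exp (-(t ^ 2)) := by
    have hmp : MeasurePreserving (fun x : ℝ => x + y) volume volume :=
      measurePreserving_add_right volume y
    have hme : MeasurableEmbedding (fun x : ℝ => x + y) :=
      (MeasurableEquiv.addRight y).measurableEmbedding
    have := hmp.setIntegral_preimage_emb hme
      (fun t => Real.exp (-((t - y) ^ 2))) (Set.Ioi y)
    have hpre : (fun x : ℝ => x + y) ⁻¹' Set.Ioi y = Set.Ioi 0 := by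
      ext u; simp [Set.mem_Ioi]
    rw [hpre] at this
    rw [← this]
    congr 1 with u
    ring_nf
  have htail : (∫ t in Set.Ioi y, Real.exp (-(t ^ 2)))
      ≤ Real.exp (-(y ^ 2)) * (Real.sqrt Real.pi / 2) := by
    have hmono : (∫ t in Set.Ioi y, Real.exp (-(t ^ 2)))
        ≤ ∫ t in Set.Ioi y, Real.exp (-(y ^ 2)) * Real.exp (-((t - y) ^ 2)) := by
      apply setIntegral_mono_on gauss_integrable.integrableOn
      · exact ((gauss_integrable.comp_sub_right y).const_mul _).integrableOn
      · exact measurableSet_Ioi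
      · intro t ht
        rw [← Real.exp_add]
        apply Real.exp_le_exp.2
        have : y ≤ t := le_of_lt ht
        nlinarith
    rw [integral_const_mul, hshift, gauss_Ioi0] at hmono
    exact hmono
  -- conclude
  have herf : erf y = 2 / Real.sqrt Real.pi * ∫ t in Set.Ioc (0:ℝ) y, Real.exp (-(t ^ 2)) := by
    rw [erf, intervalIntegral.integral_of_le hy]
  have h1 : 1 - erf y = 2 / Real.sqrt Real.pi * ∫ t in Set.Ioi y, Real.exp (-(t ^ 2)) := by
    rw [herf]
    have : (1:ℝ) = 2 / Real.sqrt Real.pi * (Real.sqrt Real.pi / 2) := by field_simp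
    rw [this, ← hsplit]
    ring
  rw [h1]
  calc 2 / Real.sqrt Real.pi * ∫ t in Set.Ioi y, Real.exp (-(t ^ 2))
      ≤ 2 / Real.sqrt Real.pi * (Real.exp (-(y ^ 2)) * (Real.sqrt Real.pi / 2)) :=
        mul_le_mul_of_nonneg_left htail (div_nonneg (by norm_num) hs.le)
    _ = Real.exp (-(y ^ 2)) := by field_simp


private lemma aux_sE {s : ℝ} (hs : 0 ≤ s) : s * Real.exp (-(2 * s)) ≤ 1/4 := by
  have he1 : (0:ℝ) < Real.exp 1 := Real.exp_pos 1
  have he2 : (2:ℝ) ≤ Real.exp 1 := by have := Real.add_one_le_exp 1; linarith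
  have hE0 : 0 ≤ Real.exp (-(2 * s)) := (Real.exp_pos _).le
  have ha := Real.add_one_le_exp (2 * s - 1)
  have hb : Real.exp (2 * s - 1) * Real.exp 1 = Real.exp (2 * s) := by
    rw [← Real.exp_add]; ring_nf
  have hc2 : Real.exp (-(2 * s)) * Real.exp (2 * s) = 1 := by
    rw [← Real.exp_add]; simp
  have hd : 2 * s * Real.exp 1 ≤ Real.exp (2 * s) := by
    calc 2 * s * Real.exp 1 ≤ Real.exp (2 * s - 1) * Real.exp 1 :=
          mul_le_mul_of_nonneg_right (by linarith) he1.le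
      _ = Real.exp (2 * s) := hb
  have h5 : s * Real.exp (-(2 * s)) * Real.exp 1 * 2 ≤ 1 := by
    calc s * Real.exp (-(2 * s)) * Real.exp 1 * 2
        = 2 * s * Real.exp 1 * Real.exp (-(2 * s)) := by ring
      _ ≤ Real.exp (2 * s) * Real.exp (-(2 * s)) := mul_le_mul_of_nonneg_right hd hE0
      _ = 1 := by rw [mul_comm]; exact hc2
  have hsE0 : 0 ≤ s * Real.exp (-(2 * s)) := mul_nonneg hs hE0
  nlinarith [mul_nonneg hsE0 (by linarith : (0:ℝ) ≤ Real.exp 1 - 2)]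

private lemma aux_tE {t : ℝ} (ht : 0 ≤ t) : t * Real.exp (-(t/2)) ≤ 1 := by
  have he1 : (0:ℝ) < Real.exp 1 := Real.exp_pos 1
  have he2 : (2:ℝ) ≤ Real.exp 1 := by have := Real.add_one_le_exp 1; linarith
  have hE0 : 0 ≤ Real.exp (-(t/2)) := (Real.exp_pos _).le
  have ha := Real.add_one_le_exp (t/2 - 1)
  have hb : Real.exp (t/2 - 1) * Real.exp 1 = Real.exp (t/2) := by
    rw [← Real.exp_add]; ring_nf
  have hc2 : Real.exp (-(t/2)) * Real.exp (t/2) = 1 := by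
    rw [← Real.exp_add]; simp
  have hd : t * Real.exp 1 ≤ 2 * Real.exp (t/2) := by
    have h := mul_le_mul_of_nonneg_right (by linarith : t/2 ≤ Real.exp (t/2 - 1)) he1.le
    rw [hb] at h
    linarith
  have h5 : t * Real.exp (-(t/2)) * Real.exp 1 ≤ 2 := by
    calc t * Real.exp (-(t/2)) * Real.exp 1
        = t * Real.exp 1 * Real.exp (-(t/2)) := by ring
      _ ≤ 2 * Real.exp (t/2) * Real.exp (-(t/2)) := mul_le_mul_of_nonneg_right hd hE0
      _ = 2 := by rw [mul_assoc, mul_comm (Real.exp (t/2)), hc2, mul_one]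
  have htE0 : 0 ≤ t * Real.exp (-(t/2)) := mul_nonneg ht hE0
  nlinarith [mul_nonneg htE0 (by linarith : (0:ℝ) ≤ Real.exp 1 - 2)]

private lemma aux_quad_a {L s : ℝ} (hL : 1 ≤ L) (hs : 0 ≤ s) :
    L/2 + 2 * s ≤ 2 * L * (s + 1/2) ^ 2 := by
  nlinarith [mul_nonneg (by linarith : (0:ℝ) ≤ L) (sq_nonneg s),
    mul_nonneg (by linarith : (0:ℝ) ≤ L - 1) hs]

private lemma aux_quad_b {L t : ℝ} (hL : 1 ≤ L) (ht : 1 ≤ t) :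
    t/2 ≤ 2 * L * (t - 1/2) ^ 2 := by
  nlinarith [mul_nonneg (by linarith : (0:ℝ) ≤ L - 1) (sq_nonneg (t - 1/2))]

set_option maxHeartbeats 1600000 in
/-- Entire approximation to the gapped linear function: for `Δ ∈ (0,1/2]`,
`ε ∈ (0, √(1/(2eπ))]`, `k = (√2/Δ)·√(log(1/(2π ε²)))` and
`f x = ((x+1−Δ)/Δ)·(1 − erf(k(x+1−3Δ/2)))/2`, one has
(a) `|f x − (x+1−Δ)/Δ| ≤ ε` on `[−1, −1+Δ]`, and (b) `0 ≤ f x ≤ 1` on `[−1+Δ, ∞)`. -/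
theorem gapped_linear_approx (Δ ε k : ℝ) (hΔ0 : 0 < Δ) (hΔ : Δ ≤ 1/2) (hε0 : 0 < ε)
    (hε : ε ≤ Real.sqrt (1 / (2 * Real.exp 1 * Real.pi)))
    (hk : k = Real.sqrt 2 / Δ * Real.sqrt (Real.log (1 / (2 * Real.pi * ε ^ 2)))) :
    (∀ x ∈ Set.Icc (-1 : ℝ) (-1 + Δ),
        |(x + 1 - Δ) / Δ * ((1 - erf (k * (x + 1 - 3 * Δ / 2))) / 2) - (x + 1 - Δ) / Δ| ≤ ε) ∧
      ∀ x : ℝ, -1 + Δ ≤ x →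
        0 ≤ (x + 1 - Δ) / Δ * ((1 - erf (k * (x + 1 - 3 * Δ / 2))) / 2) ∧
          (x + 1 - Δ) / Δ * ((1 - erf (k * (x + 1 - 3 * Δ / 2))) / 2) ≤ 1 := by
  have hπ := Real.pi_pos
  have he1 : (0:ℝ) < Real.exp 1 := Real.exp_pos 1
  set L : ℝ := Real.log (1 / (2 * Real.pi * ε ^ 2)) with hLdef
  -- ε² ≤ 1/(2eπ)
  have hεsq : ε ^ 2 ≤ 1 / (2 * Real.exp 1 * Real.pi) := by
    have h0 : (0:ℝ) ≤ 1 / (2 * Real.exp 1 * Real.pi) := by positivity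
    have := Real.sq_sqrt h0
    nlinarith [Real.sqrt_nonneg (1 / (2 * Real.exp 1 * Real.pi))]
  have hεsq' : ε ^ 2 * (2 * Real.exp 1 * Real.pi) ≤ 1 :=
    (le_div_iff₀ (by positivity)).1 hεsq
  have hL1 : 1 ≤ L := by
    rw [hLdef, Real.le_log_iff_exp_le (by positivity), le_div_iff₀ (by positivity)]
    nlinarith
  have hL0 : (0:ℝ) ≤ L := by linarith
  have hexpL : Real.exp (-L) = 2 * Real.pi * ε ^ 2 := by
    rw [hLdef, one_div, Real.log_inv, neg_neg, Real.exp_log (by positivity)]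
  set c : ℝ := Real.sqrt 2 * Real.sqrt L with hcdef
  have hc0 : 0 ≤ c := mul_nonneg (Real.sqrt_nonneg _) (Real.sqrt_nonneg _)
  have hcsq : c ^ 2 = 2 * L := by
    rw [hcdef, mul_pow, Real.sq_sqrt (by norm_num : (0:ℝ) ≤ 2), Real.sq_sqrt hL0]
  have harg : ∀ x : ℝ, k * (x + 1 - 3 * Δ / 2) = c * ((x + 1 - Δ) / Δ - 1/2) := by
    intro x
    rw [hk, hcdef]
    field_simp
    ring
  have hexpL2 : Real.exp (-(L/2)) = Real.sqrt (2 * Real.pi) * ε := by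
    have h1 : Real.exp (-(L/2)) = Real.sqrt (Real.exp (-L)) := by
      rw [← Real.exp_half]; ring_nf
    rw [h1, hexpL]
    rw [Real.sqrt_mul (by positivity), Real.sqrt_sq hε0.le]
  have hsqrt2pi : Real.sqrt (2 * Real.pi) ≤ 3 := by
    have h9 : (2 : ℝ) * Real.pi ≤ 9 := by nlinarith [Real.pi_lt_d2]
    calc Real.sqrt (2 * Real.pi) ≤ Real.sqrt 9 := Real.sqrt_le_sqrt h9
      _ = 3 := by
          rw [show (9:ℝ) = 3 ^ 2 by norm_num, Real.sqrt_sq (by norm_num)]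
  have he2 : (2:ℝ) ≤ Real.exp 1 := by
    have := Real.add_one_le_exp 1; linarith
  constructor
  · -- part (a)
    intro x hx
    obtain ⟨hx1, hx2⟩ := hx
    set t : ℝ := (x + 1 - Δ) / Δ with htdef
    set s : ℝ := -t with hsdef
    have hs0 : 0 ≤ s := by
      rw [hsdef, htdef]
      have : x + 1 - Δ ≤ 0 := by linarith
      have := div_nonpos_of_nonpos_of_nonneg this hΔ0.le
      linarith
    have hs1 : s ≤ 1 := by
      rw [hsdef, htdef, ← neg_div, div_le_one hΔ0]
      linarith
    have hargx : k * (x + 1 - 3 * Δ / 2) = -(c * (s + 1/2)) := by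
      rw [harg x, ← htdef, hsdef]; ring
    have hv0 : 0 ≤ c * (s + 1/2) := mul_nonneg hc0 (by linarith)
    have herfv : erf (k * (x + 1 - 3 * Δ / 2)) = - erf (c * (s + 1/2)) := by
      rw [hargx, erf_neg]
    have hle1 := erf_le_one (c * (s + 1/2))
    have hkey : t * ((1 - -erf (c * (s + 1/2))) / 2) - t
        = s * ((1 - erf (c * (s + 1/2))) / 2) := by
      rw [hsdef]; ring
    have habs : |t * ((1 - erf (k * (x + 1 - 3 * Δ / 2))) / 2) - t|
        = s * ((1 - erf (c * (s + 1/2))) / 2) := by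
      rw [herfv, hkey]
      exact abs_of_nonneg (mul_nonneg hs0 (by linarith))
    rw [habs]
    clear_value t s
    -- erfc bound
    have h1 : 1 - erf (c * (s + 1/2)) ≤ Real.exp (-((c * (s + 1/2)) ^ 2)) := erfc_le hv0
    have h2 : (c * (s + 1/2)) ^ 2 = 2 * L * (s + 1/2) ^ 2 := by
      rw [mul_pow, hcsq]
    have h3 : Real.exp (-((c * (s + 1/2)) ^ 2)) ≤ Real.exp (-(L/2)) * Real.exp (-(2 * s)) := by
      rw [← Real.exp_add, Real.exp_le_exp, h2]
      have := aux_quad_a hL1 hs0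
      linarith
    have h4 : Real.exp (-(L/2)) * Real.exp (-(2 * s)) =
        Real.sqrt (2 * Real.pi) * ε * Real.exp (-(2 * s)) := by rw [hexpL2]
    have hE0 : 0 ≤ Real.exp (-(2 * s)) := (Real.exp_pos _).le
    have hsE0 : 0 ≤ s * Real.exp (-(2 * s)) := mul_nonneg hs0 hE0
    have hsE : s * Real.exp (-(2 * s)) ≤ 1/4 := aux_sE hs0
    have hsp : 0 ≤ Real.sqrt (2 * Real.pi) := Real.sqrt_nonneg _
    have h7 : s * Real.exp (-(2 * s)) * Real.sqrt (2 * Real.pi) ≤ 3/4 := by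
      calc s * Real.exp (-(2 * s)) * Real.sqrt (2 * Real.pi)
          ≤ (1/4) * 3 := mul_le_mul hsE hsqrt2pi hsp (by norm_num)
        _ = 3/4 := by norm_num
    calc s * ((1 - erf (c * (s + 1/2))) / 2)
        ≤ s * (Real.sqrt (2 * Real.pi) * ε * Real.exp (-(2 * s)) / 2) := by
          apply mul_le_mul_of_nonneg_left _ hs0
          rw [← h4]
          linarith [h1, h3]
      _ = s * Real.exp (-(2 * s)) * Real.sqrt (2 * Real.pi) * ε / 2 := by ring
      _ ≤ ε := by
          have h8 := mul_le_mul_of_nonneg_right h7 hε0.le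
          linarith
  · -- part (b)
    intro x hx
    set t : ℝ := (x + 1 - Δ) / Δ with htdef
    have ht0 : 0 ≤ t := by
      rw [htdef]
      apply div_nonneg _ hΔ0.le
      linarith
    have hargx : k * (x + 1 - 3 * Δ / 2) = c * (t - 1/2) := harg x
    clear_value t
    have hle1 := erf_le_one (c * (t - 1/2))
    have hge := neg_one_le_erf (c * (t - 1/2))
    constructor
    · rw [hargx]
      apply mul_nonneg ht0
      linarith
    · rw [hargx]
      rcases le_or_gt t 1 with hle | hgt
      · calc t * ((1 - erf (c * (t - 1/2))) / 2)
            ≤ t * 1 := mul_le_mul_of_nonneg_left (by linarith) ht0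
          _ = t := mul_one t
          _ ≤ 1 := hle
      · have hu0 : 0 ≤ c * (t - 1/2) := mul_nonneg hc0 (by linarith)
        have h1 : 1 - erf (c * (t - 1/2)) ≤ Real.exp (-((c * (t - 1/2)) ^ 2)) := erfc_le hu0
        have h2 : (c * (t - 1/2)) ^ 2 = 2 * L * (t - 1/2) ^ 2 := by rw [mul_pow, hcsq]
        have h3 : Real.exp (-((c * (t - 1/2)) ^ 2)) ≤ Real.exp (-(t/2)) := by
          rw [Real.exp_le_exp, h2]
          have := aux_quad_b hL1 hgt.le
          linarith
        have hE0 : 0 ≤ Real.exp (-(t/2)) := (Real.exp_pos _).le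
        have htE : t * Real.exp (-(t/2)) ≤ 1 := aux_tE ht0
        have h6 : 1 - erf (c * (t - 1/2)) ≤ Real.exp (-(t/2)) := le_trans h1 h3
        calc t * ((1 - erf (c * (t - 1/2))) / 2)
            ≤ t * (Real.exp (-(t/2)) / 2) :=
              mul_le_mul_of_nonneg_left (by linarith) ht0
          _ = t * Real.exp (-(t/2)) / 2 := by ring
          _ ≤ 1 := by linarith
end
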